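/- arXiv:2004.02679 — 8 statements merged into one kernel-verified Lean document; each statement's English description precedes it below -/
import Mathlib

section
/- Let $w = a + bi$ with $a, b \in \mathbb{R}$, $b \neq 0$, and let $A_n \in M_n(\mathbb{C})$ be the selfadjoint matrix with zero diagonal, all entries above the diagonal equal to $w$, and all entries below the diagonal equal to $\bar{w}$. Then the characteristic polynomial $\chi_n(\lambda) = \det(\lambda I - A_n)$ satisfies the recurrence $\chi_n(\lambda) = (2\lambda + w + \bar{w})\chi_{n-1}(\lambda) - (\lambda + w)(\lambda + \bar{w})\chi_{n-2}(\lambda)$ with $\chi_0(\lambda) = 1$, $\chi_1(\lambda) = \lambda$. -/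
open Matrix Complex

/-- The selfadjoint matrix with zero diagonal, entries `w` above the
diagonal and `conj w` below the diagonal. -/
def triMat (w : ℂ) (n : ℕ) : Matrix (Fin n) (Fin n) ℂ :=
  Matrix.of fun i j => if (i : ℕ) < (j : ℕ) then w
    else if (j : ℕ) < (i : ℕ) then (starRingEnd ℂ) w else 0

/-- The characteristic polynomial `χ_n(λ) = det (λ I - A_n)` evaluated at `λ`. -/
noncomputable def chi (w : ℂ) (n : ℕ) (lam : ℂ) : ℂ :=
  (lam • (1 : Matrix (Fin n) (Fin n) ℂ) - triMat w n).det

/-!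
In `λI - A_{n+2}` rows `0` and `1` agree beyond column `1`, and columns `0` and `1` agree
beyond row `1`. Subtracting row `1` from row `0` and column `1` from column `0` therefore
leaves a matrix whose first row and column vanish beyond index `1`, with the lower right
block untouched. Expanding along the first row and then the first column gives
`χ_{n+2} = (2λ + w + w̄) χ_{n+1} - (λ + w)(λ + w̄) χ_n`, because every principal submatrix
of `A_m` on increasing indices is again of the form `A_k`.
-/

namespace Matrix

variable {R : Type*} [CommRing R] {n : ℕ}

theorem det_succ_succ_of_border_tail_eq_zero (B : Matrix (Fin (n + 2)) (Fin (n + 2)) R)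
    (hrow : ∀ j : Fin n, B 0 j.succ.succ = 0) (hcol : ∀ i : Fin n, B i.succ.succ 0 = 0) :
    B.det = B 0 0 * (B.submatrix Fin.succ Fin.succ).det -
      B 0 1 * B 1 0 * (B.submatrix (Fin.succ ∘ Fin.succ) (Fin.succ ∘ Fin.succ)).det := by
  have hminor : (B.submatrix Fin.succ (Fin.succAbove 1)).det =
      B 1 0 * (B.submatrix (Fin.succ ∘ Fin.succ) (Fin.succ ∘ Fin.succ)).det := by
    rw [det_succ_column_zero, Fin.sum_univ_succ]
    simp [hcol, Function.comp_def]
  rw [det_succ_row_zero, Fin.sum_univ_succ, Fin.sum_univ_succ]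
  simp only [hrow, hminor, mul_zero, zero_mul, Finset.sum_const_zero, add_zero,
    Fin.succAbove_zero, Fin.succ_zero_eq_one, Fin.val_zero, Fin.val_one, pow_zero, pow_one]
  ring

theorem det_succ_succ_of_tail_rows_cols_eq (M : Matrix (Fin (n + 2)) (Fin (n + 2)) R)
    (hrow : ∀ j : Fin n, M 0 j.succ.succ = M 1 j.succ.succ)
    (hcol : ∀ i : Fin n, M i.succ.succ 0 = M i.succ.succ 1) :
    M.det = (M 0 0 - M 0 1 - M 1 0 + M 1 1) * (M.submatrix Fin.succ Fin.succ).det -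
      (M 0 1 - M 1 1) * (M 1 0 - M 1 1) *
        (M.submatrix (Fin.succ ∘ Fin.succ) (Fin.succ ∘ Fin.succ)).det := by
  have h01 : (0 : Fin (n + 2)) ≠ 1 := Fin.zero_ne_one
  set B := transvection 0 1 (-1) * M * transvection 1 0 (-1) with hB
  have hdet : M.det = B.det := by simp [hB, det_mul, det_transvection_of_ne, h01, h01.symm]
  have htail : ∀ i j : Fin (n + 1), B i.succ j.succ = M i.succ j.succ := fun i j => by
    simp [hB, Fin.succ_ne_zero]
  have hsub₁ : B.submatrix Fin.succ Fin.succ = M.submatrix Fin.succ Fin.succ := by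
    ext i j; exact htail i j
  have hsub₂ : B.submatrix (Fin.succ ∘ Fin.succ) (Fin.succ ∘ Fin.succ) =
      M.submatrix (Fin.succ ∘ Fin.succ) (Fin.succ ∘ Fin.succ) := by
    ext i j; exact htail i.succ j.succ
  rw [hdet, det_succ_succ_of_border_tail_eq_zero B (fun j => by simp [hB, hrow])
    (fun i => by simp [hB, hcol]), hsub₁, hsub₂]
  simp only [hB, mul_transvection_apply_same, transvection_mul_apply_same,
    mul_transvection_apply_of_ne, transvection_mul_apply_of_ne, ne_eq, one_ne_zero,
    not_false_eq_true]
  ring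

end Matrix

theorem triMat_apply {n : ℕ} (w : ℂ) (i j : Fin n) :
    triMat w n i j = if i < j then w else if j < i then (starRingEnd ℂ) w else 0 :=
  rfl

theorem triMat_submatrix {m n : ℕ} (w : ℂ) {f : Fin m → Fin n} (hf : StrictMono f) :
    (triMat w n).submatrix f f = triMat w m := by
  ext i j
  simp only [triMat_apply, submatrix_apply, hf.lt_iff_lt]

theorem chi_eq_det_submatrix {m n : ℕ} (w lam : ℂ) {f : Fin m → Fin n} (hf : StrictMono f) :
    chi w m lam = ((lam • 1 - triMat w n).submatrix f f).det := by
  rw [chi, ← triMat_submatrix w hf, ← submatrix_one f hf.injective]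
  rfl

theorem chi_zero (w lam : ℂ) : chi w 0 lam = 1 := det_isEmpty

theorem chi_one (w lam : ℂ) : chi w 1 lam = lam := by
  simp [chi, triMat]

theorem chi_add_two (w lam : ℂ) (n : ℕ) :
    chi w (n + 2) lam = (2 * lam + w + (starRingEnd ℂ) w) * chi w (n + 1) lam -
      (lam + w) * (lam + (starRingEnd ℂ) w) * chi w n lam := by
  let M : Matrix (Fin (n + 2)) (Fin (n + 2)) ℂ := lam • 1 - triMat w (n + 2)
  have hrow : ∀ j : Fin n, M 0 j.succ.succ = M 1 j.succ.succ := fun j => by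
    simp [M, triMat_apply, one_apply_ne, Fin.one_lt_succ_succ, Fin.succ_pos,
      (Fin.succ_ne_zero _).symm, (Fin.succ_succ_ne_one j).symm]
  have hcol : ∀ i : Fin n, M i.succ.succ 0 = M i.succ.succ 1 := fun i => by
    simp [M, triMat_apply, one_apply_ne, Fin.one_lt_succ_succ, Fin.succ_pos,
      Fin.succ_succ_ne_one]
  have hsucc : StrictMono (Fin.succ : Fin (n + 1) → Fin (n + 2)) := Fin.strictMono_succ
  rw [chi_eq_det_submatrix w lam hsucc,
    chi_eq_det_submatrix w lam (hsucc.comp Fin.strictMono_succ)]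
  change M.det = _
  rw [det_succ_succ_of_tail_rows_cols_eq M hrow hcol]
  obtain ⟨h00, h01, h10, h11⟩ : M 0 0 = lam ∧ M 0 1 = -w ∧ M 1 0 = -(starRingEnd ℂ) w ∧
      M 1 1 = lam := by
    simp [M, triMat_apply]
  rw [h00, h01, h10, h11]
  ring

theorem chi_recurrence_general (w : ℂ) (lam : ℂ) :
    chi w 0 lam = 1 ∧ chi w 1 lam = lam ∧
    ∀ n : ℕ, chi w (n + 2) lam =
      (2 * lam + w + (starRingEnd ℂ) w) * chi w (n + 1) lam -
        (lam + w) * (lam + (starRingEnd ℂ) w) * chi w n lam :=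
  ⟨chi_zero w lam, chi_one w lam, chi_add_two w lam⟩

theorem chi_recurrence (a b : ℝ) (hb : b ≠ 0) (w : ℂ) (hw : w = a + b * I) (lam : ℂ) :
    chi w 0 lam = 1 ∧ chi w 1 lam = lam ∧
    ∀ n : ℕ, chi w (n + 2) lam =
      (2 * lam + w + (starRingEnd ℂ) w) * chi w (n + 1) lam -
        (lam + w) * (lam + (starRingEnd ℂ) w) * chi w n lam :=
  chi_recurrence_general w lam
end

section
/- Let $w = a + bi$ with $b \neq 0$, and let $A_n$ be the $n \times n$ matrix with zero diagonal, upper-triangular entries $w$ and lower-triangular entries $\bar{w}$. Then $\det(\lambda I - A_n) = \dfrac{w(\lambda + \bar{w})^n - \bar{w}(\lambda + w)^n}{w - \bar{w}}$. -/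
/-!
Write `u, v` for the entries above and below the diagonal. Then
`λ • 1 - A = T - v • J`, where `J` is the all-ones matrix and `T` is upper triangular with
`λ + v` on the diagonal and `v - u` above it. With `α = λ + v`, `β = λ + u`, the vector
`y i = α ^ i * β ^ (n - 1 - i)` satisfies `T y = α ^ n • 1` (a truncated geometric sum), so the
matrix determinant lemma gives `det (λ • 1 - A) = α ^ n - v * ∑ i, y i`, and the full
geometric sum yields the formula. If `λ + v = 0`, transposing swaps `u` and `v`.
-/

open Matrix Complex

namespace Matrix

variable {R K : Type*} {n : ℕ}

def offDiagConst [Zero R] (u v : R) (n : ℕ) : Matrix (Fin n) (Fin n) R :=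
  of fun i j => if i < j then u else if j < i then v else 0

theorem offDiagConst_transpose [Zero R] (u v : R) :
    (offDiagConst u v n)ᵀ = offDiagConst v u n := by
  ext i j
  rcases lt_trichotomy i j with h | rfl | h
  · simp [offDiagConst, h, h.not_gt]
  · simp [offDiagConst]
  · simp [offDiagConst, h, h.not_gt]

section CommRing

variable [CommRing R]

theorem det_add_replicateCol_mulVec_mul_replicateRow {m : Type*} [Fintype m] [DecidableEq m]
    (A : Matrix m m R) (x r : m → R) :
    (A + replicateCol (Fin 1) (A *ᵥ x) * replicateRow (Fin 1) r).det =
      A.det * (1 + r ⬝ᵥ x) := by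
  rw [← det_one_add_replicateCol_mul_replicateRow (ι := Fin 1), ← det_mul, Matrix.mul_add,
    Matrix.mul_one, replicateCol_mulVec, Matrix.mul_assoc]
  -- the two sides differ only in the `Fintype (Fin 1)` instance
  rfl

theorem det_smul_one_sub_offDiagConst_zero (d c : R) :
    (d • (1 : Matrix (Fin n) (Fin n) R) - offDiagConst c 0 n).det = d ^ n := by
  rw [det_of_isUpperTriangular]
  · simp [offDiagConst]
  · intro i j (hji : j < i)
    simp [offDiagConst, hji.ne', hji.not_gt]

theorem offDiagConst_zero_mulVec (c : R) (y : ℕ → R) (i : Fin n) :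
    (offDiagConst c 0 n *ᵥ fun j => y j) i = c * ∑ k ∈ Finset.Ioo (i : ℕ) n, y k := by
  rw [← Fin.map_valEmbedding_Ioi, Finset.sum_map, Finset.mul_sum, ← Finset.filter_lt_eq_Ioi,
    Finset.sum_filter, mulVec, dotProduct]
  refine Finset.sum_congr rfl fun j _ => ?_
  by_cases h : i < j <;> simp [offDiagConst, h]

theorem smul_one_sub_offDiagConst_mulVec_geom (α β : R) :
    (α • (1 : Matrix (Fin n) (Fin n) R) - offDiagConst (β - α) 0 n) *ᵥ
      (fun i => α ^ (i : ℕ) * β ^ (n - 1 - i)) = fun _ => α ^ n := by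
  ext i
  have hgeom := mul_geom_sum₂_Ico α β (m := i + 1) i.is_lt
  rw [Finset.Ico_add_one_left_eq_Ioo] at hgeom
  rw [sub_mulVec, Pi.sub_apply, offDiagConst_zero_mulVec (y := fun k => α ^ k * β ^ (n - 1 - k)),
    smul_mulVec, one_mulVec, Pi.smul_apply, smul_eq_mul,
    show n - 1 - (i : ℕ) = n - (i + 1) by omega]
  linear_combination hgeom

theorem smul_one_sub_offDiagConst_eq (lam u v : R) :
    lam • (1 : Matrix (Fin n) (Fin n) R) - offDiagConst u v n =
      ((lam + v) • 1 - offDiagConst (u - v) 0 n) +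
        replicateCol (Fin 1) (fun _ => -v) * replicateRow (Fin 1) (1 : Fin n → R) := by
  ext i j
  rcases lt_trichotomy i j with h | rfl | h
  · simp [offDiagConst, mul_apply, h, h.ne]
    ring
  · simp [offDiagConst, mul_apply]
  · simp [offDiagConst, mul_apply, h, h.ne', h.not_gt]

end CommRing

variable [Field K]

theorem sub_mul_det_smul_one_sub_offDiagConst_of_add_ne_zero {lam u v : K} (h : lam + v ≠ 0) :
    (u - v) * (lam • (1 : Matrix (Fin n) (Fin n) K) - offDiagConst u v n).det =
      u * (lam + v) ^ n - v * (lam + u) ^ n := by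
  rw [smul_one_sub_offDiagConst_eq, show u - v = (lam + u) - (lam + v) by ring]
  set α := lam + v
  set β := lam + u
  set y : Fin n → K := fun i => α ^ (i : ℕ) * β ^ (n - 1 - i)
  have hS : (α • 1 - offDiagConst (β - α) 0 n) *ᵥ ((-v / α ^ n) • y) = fun _ => -v := by
    ext
    rw [mulVec_smul, smul_one_sub_offDiagConst_mulVec_geom, Pi.smul_apply, smul_eq_mul]
    field_simp
  have hgeom : (∑ i, y i) * (α - β) = α ^ n - β ^ n := by
    rw [Fin.sum_univ_eq_sum_range (fun k => α ^ k * β ^ (n - 1 - k)), geom_sum₂_mul]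
  rw [← hS, det_add_replicateCol_mulVec_mul_replicateRow, det_smul_one_sub_offDiagConst_zero,
    dotProduct_smul, one_dotProduct, smul_eq_mul]
  field_simp
  linear_combination v * hgeom

theorem sub_mul_det_smul_one_sub_offDiagConst (lam u v : K) :
    (u - v) * (lam • (1 : Matrix (Fin n) (Fin n) K) - offDiagConst u v n).det =
      u * (lam + v) ^ n - v * (lam + u) ^ n := by
  by_cases hv : lam + v = 0
  · by_cases hu : lam + u = 0
    · obtain rfl : u = v := by linear_combination hu - hv
      ring
    · rw [← det_transpose, transpose_sub, transpose_smul, transpose_one, offDiagConst_transpose]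
      linear_combination -sub_mul_det_smul_one_sub_offDiagConst_of_add_ne_zero (n := n) (u := v) hu
  · exact sub_mul_det_smul_one_sub_offDiagConst_of_add_ne_zero hv

end Matrix

theorem det_triMat (a b : ℝ) (hb : b ≠ 0) (w : ℂ) (hw : w = a + b * I)
    (n : ℕ) (lam : ℂ) :
    (lam • (1 : Matrix (Fin n) (Fin n) ℂ) - triMat w n).det =
      (w * (lam + (starRingEnd ℂ) w) ^ n - (starRingEnd ℂ) w * (lam + w) ^ n) /
        (w - (starRingEnd ℂ) w) := by
  have hw_sub : w - (starRingEnd ℂ) w ≠ 0 := by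
    rw [sub_conj, hw]
    simpa [Complex.ext_iff] using hb
  rw [eq_div_iff hw_sub, mul_comm, show triMat w n = offDiagConst w (starRingEnd ℂ w) n from rfl]
  exact sub_mul_det_smul_one_sub_offDiagConst lam w (starRingEnd ℂ w)
end

section
/- Let $a, b \in \mathbb{R}$ with $b \neq 0$, $w = a + bi$, $\alpha = \operatorname{arccot}(a/b)$, and let $A_n$ be the $n\times n$ matrix with zero diagonal, upper entries $w$, lower entries $\bar{w}$. Then the eigenvalues of $A_n$ are exactly $\lambda_k = b \cot\frac{\alpha + k\pi}{n} - a$ for $k = 0, 1, \dots, n-1$. -/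
open Matrix Complex Real

/-- `arccot x ∈ (0, π)`. -/
noncomputable def arccot (x : ℝ) : ℝ := Real.pi / 2 - Real.arctan x


/-!
With `w = a + b i`, the matrix `x - A_n` has `x` on the diagonal, `-w` above and `-conj w`
below. Its determinant is the interpolation of the two triangular cases, giving
`(conj w - w) det (x - A_n) = conj w (x + w) ^ n - w (x + conj w) ^ n`.
Comparing moduli, a root has `|x + conj w| = |x + w|`, so it is real. Writing
`x + a = b cot θ` with `θ ∈ (0, π)` puts `x + w` and `w` in polar form with arguments `θ` and
`α = arccot (a / b)`, and the equation becomes `sin (α - n θ) = 0`, i.e. `n θ = α + k π` with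
`0 ≤ k < n`.
-/

namespace Matrix

variable {R : Type*} [CommRing R] {n : ℕ}

def triangleToeplitz (d p q : R) (n : ℕ) : Matrix (Fin n) (Fin n) R :=
  of fun i j => if i < j then p else if j < i then q else d

lemma triangleToeplitz_sub_const (d p q c : R) :
    triangleToeplitz d p q n - of (fun _ _ => c) =
      triangleToeplitz (d - c) (p - c) (q - c) n := by
  ext i j
  simp only [triangleToeplitz, sub_apply, of_apply]
  split_ifs <;> rfl

lemma algebraMap_sub_triangleToeplitz (x d p q : R) :
    algebraMap R _ x - triangleToeplitz d p q n = triangleToeplitz (x - d) (-p) (-q) n := by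
  ext i j
  obtain h | rfl | h := lt_trichotomy i j
  · simp [triangleToeplitz, algebraMap_matrix_apply, h, h.ne]
  · simp [triangleToeplitz, algebraMap_matrix_apply]
  · simp [triangleToeplitz, algebraMap_matrix_apply, h.ne', h.not_gt, h]

lemma det_triangleToeplitz_of_zero_above (d q : R) :
    det (triangleToeplitz d 0 q n) = d ^ n := by
  rw [det_of_isLowerTriangular _ fun i j (hij : i < j) => by simp [triangleToeplitz, hij]]
  simp [triangleToeplitz]

lemma det_triangleToeplitz_of_zero_below (d p : R) :
    det (triangleToeplitz d p 0 n) = d ^ n := by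
  rw [det_of_isUpperTriangular fun i j (hij : j < i) => by
    simp [triangleToeplitz, hij, hij.not_gt]]
  simp [triangleToeplitz]

lemma exists_det_sub_const_eq (M : Matrix (Fin n) (Fin n) R) :
    ∃ β : R, ∀ c : R, det (M - of fun _ _ => c) = det M - c * β := by
  cases n with
  | zero => exact ⟨0, fun c => by simp⟩
  | succ n =>
    -- subtracting from each row the previous one leaves `c` in the first row only
    let B : R → Matrix (Fin (n + 1)) (Fin (n + 1)) R := fun c => of fun i j =>
      Fin.cases (M 0 j - c) (fun i => M i.succ j - M i.castSucc j) i
    have hB : ∀ c, det (M - of fun _ _ => c) = det (B c) := fun c =>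
      det_eq_of_forall_row_eq_smul_add_pred (fun _ => 1) (fun j => rfl)
        (fun i j => by simp [B])
    refine ⟨∑ j : Fin (n + 1), (-1) ^ (j : ℕ) * det ((B 0).submatrix Fin.succ j.succAbove),
      fun c => ?_⟩
    have hM : det M = det (B 0) := by
      rw [← hB, show (of fun _ _ => (0 : R)) = 0 from rfl, sub_zero]
    have hminor : ∀ c (j : Fin (n + 1)),
        (B c).submatrix Fin.succ j.succAbove = (B 0).submatrix Fin.succ j.succAbove :=
      fun _ _ => rfl
    rw [hB, hM, det_succ_row_zero, det_succ_row_zero, Finset.mul_sum, ← Finset.sum_sub_distrib]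
    refine Finset.sum_congr rfl fun j _ => ?_
    rw [hminor c]
    simp only [B, of_apply, Fin.cases_zero]
    ring

/-- `det (T - c)` is affine in `c`, and `T - c` is triangular for `c = p` and `c = q`. -/
theorem sub_mul_det_triangleToeplitz (d p q : R) :
    (p - q) * det (triangleToeplitz d p q n) = p * (d - q) ^ n - q * (d - p) ^ n := by
  obtain ⟨β, hβ⟩ := exists_det_sub_const_eq (triangleToeplitz d p q n)
  have hp := hβ p
  have hq := hβ q
  rw [triangleToeplitz_sub_const, sub_self, det_triangleToeplitz_of_zero_above] at hp
  rw [triangleToeplitz_sub_const, sub_self, det_triangleToeplitz_of_zero_below] at hq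
  linear_combination q * hp - p * hq

theorem mem_spectrum_triangleToeplitz_iff {K : Type*} [Field K] {d p q : K} (hpq : p ≠ q)
    (x : K) :
    x ∈ spectrum K (triangleToeplitz d p q n) ↔ p * (x - d + q) ^ n = q * (x - d + p) ^ n := by
  have hqp : -p - -q ≠ 0 := by rwa [neg_sub_neg, sub_ne_zero, ne_comm]
  rw [spectrum.mem_iff, isUnit_iff_isUnit_det, isUnit_iff_ne_zero, not_not,
    algebraMap_sub_triangleToeplitz, ← mul_right_inj' hqp, sub_mul_det_triangleToeplitz, mul_zero]
  simp only [sub_neg_eq_add, neg_mul, neg_add_eq_sub, sub_eq_zero, eq_comm]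

end Matrix

lemma triMat_eq_triangleToeplitz (w : ℂ) (n : ℕ) :
    triMat w n = triangleToeplitz 0 w (starRingEnd ℂ w) n := rfl

lemma mem_spectrum_triMat_iff {w : ℂ} (hw : w.im ≠ 0) (n : ℕ) (x : ℂ) :
    x ∈ spectrum ℂ (triMat w n) ↔
      w * (x + starRingEnd ℂ w) ^ n = starRingEnd ℂ w * (x + w) ^ n := by
  rw [triMat_eq_triangleToeplitz,
    mem_spectrum_triangleToeplitz_iff (Ne.symm (mt conj_eq_iff_im.1 hw)), sub_zero]

lemma im_eq_zero_of_mul_add_conj_pow_eq {w x : ℂ} (hw : w.im ≠ 0) {n : ℕ} (hn : n ≠ 0)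
    (h : w * (x + starRingEnd ℂ w) ^ n = starRingEnd ℂ w * (x + w) ^ n) : x.im = 0 := by
  have hw0 : ‖w‖ ≠ 0 := norm_ne_zero_iff.2 fun h0 => hw (by simp [h0])
  have hnorm : ‖x + starRingEnd ℂ w‖ = ‖x + w‖ := by
    have := congrArg norm h
    rw [norm_mul, norm_mul, norm_pow, norm_pow, norm_conj, mul_right_inj' hw0] at this
    exact (pow_left_inj₀ (norm_nonneg _) (norm_nonneg _) hn).1 this
  have hsq := congrArg (· ^ 2) hnorm
  simp only [Complex.sq_norm, normSq_apply, add_re, add_im, conj_re, conj_im] at hsq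
  have : x.im * w.im = 0 := by linarith
  exact (mul_eq_zero.1 this).resolve_right hw

lemma mul_conj_pow_eq_conj_mul_pow_iff (w u : ℂ) (n : ℕ) :
    w * starRingEnd ℂ u ^ n = starRingEnd ℂ w * u ^ n ↔
      (w * starRingEnd ℂ u ^ n).im = 0 := by
  rw [← conj_eq_iff_im, eq_comm]
  simp

lemma im_mul_conj_pow_polar (s α r θ : ℝ) (n : ℕ) :
    ((s : ℂ) * exp (α * I) * starRingEnd ℂ (r * exp (θ * I)) ^ n).im =
      s * r ^ n * Real.sin (α - n * θ) := by
  have : (s : ℂ) * exp (α * I) * starRingEnd ℂ (r * exp (θ * I)) ^ n =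
      ((s * r ^ n : ℝ) : ℂ) * exp ((α - n * θ : ℝ) * I) := by
    rw [map_mul, conj_ofReal, ← exp_conj, map_mul, conj_ofReal, conj_I, mul_pow,
      ← Complex.exp_nat_mul,
      show ((α - n * θ : ℝ) : ℂ) * I = α * I + n * (θ * -I) by push_cast; ring, Complex.exp_add]
    push_cast
    ring
  rw [this, im_ofReal_mul, exp_ofReal_mul_I_im]

lemma ofReal_mul_cot_add_mul_I (b θ : ℝ) (hθ : Real.sin θ ≠ 0) :
    ((b * Real.cot θ : ℝ) : ℂ) + b * I = ((b / Real.sin θ : ℝ) : ℂ) * exp (θ * I) := by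
  have hθ' : Complex.sin θ ≠ 0 := mod_cast hθ
  rw [exp_mul_I, Real.cot_eq_cos_div_sin]
  push_cast
  field_simp

lemma arccot_mem_Ioo (x : ℝ) : arccot x ∈ Set.Ioo 0 π := by
  unfold arccot
  constructor <;> linarith [Real.arctan_lt_pi_div_two x, Real.neg_pi_div_two_lt_arctan x]

lemma cot_arccot (x : ℝ) : Real.cot (arccot x) = x := by
  rw [arccot, Real.cot_eq_cos_div_sin, Real.cos_pi_div_two_sub, Real.sin_pi_div_two_sub,
    ← Real.tan_eq_sin_div_cos, Real.tan_arctan]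

lemma sin_sub_nat_mul_eq_zero_iff {α θ : ℝ} (hα : α ∈ Set.Ioo 0 π)
    (hθ : θ ∈ Set.Ioo 0 π) {n : ℕ} (hn : n ≠ 0) :
    Real.sin (α - n * θ) = 0 ↔ ∃ k : Fin n, θ = (α + k * π) / n := by
  have hn' : (0 : ℝ) < n := by positivity
  constructor
  · rw [Real.sin_eq_zero_iff]
    rintro ⟨m, hm⟩
    have hnθ : 0 < n * θ ∧ n * θ < n * π :=
      ⟨mul_pos hn' hθ.1, mul_lt_mul_of_pos_left hθ.2 hn'⟩
    have hm_le : m ≤ 0 := by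
      have : (m : ℝ) * π < 1 * π := by linarith [hα.2]
      exact Int.lt_add_one_iff.1 (by exact_mod_cast lt_of_mul_lt_mul_right this pi_pos.le)
    have hm_gt : -(n : ℤ) < m := by
      have : -(n : ℝ) * π < m * π := by linarith [hα.1]
      exact_mod_cast lt_of_mul_lt_mul_right this pi_pos.le
    obtain ⟨k, hk⟩ := Int.eq_ofNat_of_zero_le (neg_nonneg.2 hm_le)
    refine ⟨⟨k, by omega⟩, ?_⟩
    have hkm : (k : ℝ) = -m := by exact_mod_cast hk.symm
    rw [eq_div_iff hn'.ne', Fin.val_mk, hkm]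
    linarith
  · rintro ⟨k, rfl⟩
    rw [mul_div_cancel₀ _ hn'.ne', sub_add_cancel_left, Real.sin_neg, Real.sin_nat_mul_pi,
      neg_zero]

lemma add_nat_mul_pi_div_mem_Ioo {α : ℝ} (hα : α ∈ Set.Ioo 0 π) {n : ℕ} (k : Fin n) :
    (α + k * π) / n ∈ Set.Ioo 0 π := by
  have hn : (0 : ℝ) < n := by exact_mod_cast k.pos
  have hk : (k : ℝ) + 1 ≤ n := by exact_mod_cast k.isLt
  rw [Set.mem_Ioo, lt_div_iff₀ hn, div_lt_iff₀ hn]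
  constructor <;> nlinarith [pi_pos, hα.1, hα.2]

lemma mul_add_conj_pow_eq_conj_mul_add_pow_iff_sin {a b : ℝ} (hb : b ≠ 0) {θ : ℝ}
    (hθ : Real.sin θ ≠ 0) (n : ℕ) :
    (a + b * I) * (((b * Real.cot θ - a : ℝ) : ℂ) + starRingEnd ℂ (a + b * I)) ^ n =
        starRingEnd ℂ (a + b * I) * (((b * Real.cot θ - a : ℝ) : ℂ) + (a + b * I)) ^ n ↔
      Real.sin (arccot (a / b) - n * θ) = 0 := by
  set α := arccot (a / b)
  have hα : Real.sin α ≠ 0 :=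
    (Real.sin_pos_of_pos_of_lt_pi (arccot_mem_Ioo _).1 (arccot_mem_Ioo _).2).ne'
  have hw : (a + b * I : ℂ) = ((b / Real.sin α : ℝ) : ℂ) * exp (α * I) := by
    rw [← ofReal_mul_cot_add_mul_I b α hα, cot_arccot, mul_div_cancel₀ _ hb]
  have hu : ((b * Real.cot θ - a : ℝ) : ℂ) + (a + b * I) =
      ((b / Real.sin θ : ℝ) : ℂ) * exp (θ * I) := by
    rw [← ofReal_mul_cot_add_mul_I b θ hθ]
    push_cast
    ring
  have hconj : ((b * Real.cot θ - a : ℝ) : ℂ) + starRingEnd ℂ (a + b * I) =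
      starRingEnd ℂ (((b * Real.cot θ - a : ℝ) : ℂ) + (a + b * I)) := by
    simp only [map_add, conj_ofReal]
  rw [hconj, mul_conj_pow_eq_conj_mul_pow_iff, hu, hw, im_mul_conj_pow_polar]
  simp [hb, hα, hθ]

theorem eigenvalues_triMat (a b : ℝ) (hb : b ≠ 0) (n : ℕ) (hn : 1 ≤ n) :
    spectrum ℂ (triMat (a + b * I) n) =
      {x : ℂ | ∃ k : Fin n,
        x = ((b * Real.cot ((arccot (a / b) + k * Real.pi) / n) - a : ℝ) : ℂ)} := by
  have hw : (a + b * I : ℂ).im ≠ 0 := by simpa using hb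
  have hn0 : n ≠ 0 := by omega
  have hα := arccot_mem_Ioo (a / b)
  ext x
  rw [mem_spectrum_triMat_iff hw, Set.mem_ofPred_eq]
  constructor
  · intro h
    obtain ⟨θ, hθ, rfl⟩ : ∃ θ ∈ Set.Ioo 0 π, x = ((b * Real.cot θ - a : ℝ) : ℂ) :=
      ⟨arccot ((x.re + a) / b), arccot_mem_Ioo _, Complex.ext
        (by rw [ofReal_re, cot_arccot, mul_div_cancel₀ _ hb, add_sub_cancel_right])
        (by rw [ofReal_im, im_eq_zero_of_mul_add_conj_pow_eq hw hn0 h])⟩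
    rw [mul_add_conj_pow_eq_conj_mul_add_pow_iff_sin hb
      (Real.sin_pos_of_pos_of_lt_pi hθ.1 hθ.2).ne'] at h
    obtain ⟨k, rfl⟩ := (sin_sub_nat_mul_eq_zero_iff hα hθ hn0).1 h
    exact ⟨k, rfl⟩
  · rintro ⟨k, rfl⟩
    have hθ := add_nat_mul_pi_div_mem_Ioo hα k
    rw [mul_add_conj_pow_eq_conj_mul_add_pow_iff_sin hb
      (Real.sin_pos_of_pos_of_lt_pi hθ.1 hθ.2).ne']
    exact (sin_sub_nat_mul_eq_zero_iff hα hθ hn0).2 ⟨k, rfl⟩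
end

section
/- Define the derivative polynomials $P_n$ by $P_0(x) = x$ and $P_n(x) = (1+x^2) P'_{n-1}(x)$ for $n \geq 1$. Then for all $n \geq 0$ and all $\theta$ with $\cos\theta \neq 0$, the $n$-th derivative of $\tan$ satisfies $\frac{d^n}{d\theta^n} \tan\theta = P_n(\tan\theta)$. -/
open Polynomial

/-- The derivative polynomials of the tangent function. -/
noncomputable def P : ℕ → Polynomial ℝ
  | 0 => Polynomial.X
  | n + 1 => (1 + Polynomial.X ^ 2) * (P n).derivative

/-! Since `tan' = 1 + tan ^ 2`, the chain rule gives `(p ∘ tan)' = ((1 + X ^ 2) * p') ∘ tan`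
for every polynomial `p`; iterating this from `p = X` is exactly the recursion defining `P n`. -/

theorem Real.hasDerivAt_tan_one_add_sq {x : ℝ} (hx : Real.cos x ≠ 0) :
    HasDerivAt Real.tan (1 + Real.tan x ^ 2) x := by
  simpa only [← Real.inv_one_add_tan_sq hx, one_div, inv_inv] using Real.hasDerivAt_tan hx

theorem Polynomial.hasDerivAt_eval_tan (p : ℝ[X]) {x : ℝ} (hx : Real.cos x ≠ 0) :
    HasDerivAt (fun y => p.eval (Real.tan y))
      (((1 + X ^ 2) * derivative p).eval (Real.tan x)) x := by
  have h := (p.hasDerivAt (Real.tan x)).comp x (Real.hasDerivAt_tan_one_add_sq hx)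
  simpa only [eval_mul, eval_add, eval_one, eval_pow, eval_X, Function.comp_def, mul_comm] using h

theorem iteratedDeriv_tan (n : ℕ) (θ : ℝ) (hθ : Real.cos θ ≠ 0) :
    iteratedDeriv n Real.tan θ = (P n).eval (Real.tan θ) := by
  induction n generalizing θ with
  | zero => simp [P]
  | succ n ih =>
    have hcos : IsOpen {x : ℝ | Real.cos x ≠ 0} :=
      isOpen_compl_singleton.preimage Real.continuous_cos
    have heq : iteratedDeriv n Real.tan =ᶠ[nhds θ] fun x => (P n).eval (Real.tan x) :=
      Filter.eventually_of_mem (hcos.mem_nhds hθ) ih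
    rw [iteratedDeriv_succ]
    exact ((P n).hasDerivAt_eval_tan hθ).congr_of_eventuallyEq heq |>.deriv
end

section
/- Define the tangent polynomials $T_n$ by $T_n(x) = \frac{x P_n(x) - x^2 \cdot [n=0]}{1+x^2}$ equivalently via the relation $x P_n(x) = (1+x^2) T_n(x)$ for $n \geq 1$, where $P_n$ are the derivative polynomials of tangent. Then $T_n$ has nonnegative integer coefficients and degree $n$ for $n \geq 1$. -/
open Polynomial

/-!
Writing `P (n + 1) = (1 + x²) Qₙ`, the recursion for `P` becomes
`Q₀ = 1`, `Qₙ₊₁ = 2x Qₙ + (1 + x²) Qₙ'`, which makes sense over `ℕ`; so `Tₙ₊₁ = x Qₙ` has natural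
coefficients. The coefficient of `x^(n+1)` in `Qₙ₊₁` is at least twice that of `xⁿ` in `Qₙ`, so
`Qₙ` has degree exactly `n`.
-/

section TangentStep

variable {R : Type*} [CommSemiring R]

/-- The expanded form of `((1 + x²) q)'`. -/
noncomputable def tangentStep (q : R[X]) : R[X] :=
  2 * X * q + (1 + X ^ 2) * derivative q

theorem map_tangentStep {S : Type*} [CommSemiring S] (f : R →+* S) (q : R[X]) :
    (tangentStep q).map f = tangentStep (q.map f) := by
  simp [tangentStep, derivative_map]

theorem map_iterate_tangentStep_one {S : Type*} [CommSemiring S] (f : R →+* S) (n : ℕ) :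
    (tangentStep^[n] (1 : R[X])).map f = tangentStep^[n] 1 := by
  rw [← Polynomial.map_one f]
  exact ((Function.Semiconj.iterate_right (map_tangentStep f) n) 1)

theorem natDegree_tangentStep_le {q : R[X]} {k : ℕ} (hq : q.natDegree ≤ k) :
    (tangentStep q).natDegree ≤ k + 1 := by
  have hX : (2 * X * q).natDegree ≤ k + 1 := by
    have h1 : (2 * X : R[X]).natDegree ≤ 1 := by compute_degree
    exact (natDegree_mul_le_of_le h1 hq).trans_eq (add_comm 1 k)
  have hD : ((1 + X ^ 2) * derivative q).natDegree ≤ k + 1 := by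
    rcases k with _ | k
    · rw [eq_C_of_natDegree_eq_zero (Nat.le_zero.mp hq), derivative_C, mul_zero, natDegree_zero]
      exact zero_le_one
    · have h2 : (1 + X ^ 2 : R[X]).natDegree ≤ 2 := by compute_degree
      have hd := (natDegree_derivative_le q).trans (Nat.sub_le_sub_right hq 1)
      exact (natDegree_mul_le_of_le h2 hd).trans (by omega)
  exact natDegree_add_le_of_degree_le hX hD

end TangentStep

theorem coeff_tangentStep_succ_ne_zero {q : ℕ[X]} {k : ℕ} (hq : q.coeff k ≠ 0) :
    (tangentStep q).coeff (k + 1) ≠ 0 := by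
  have : (2 * X * q).coeff (k + 1) = 2 * q.coeff k := by
    rw [mul_comm 2 X, mul_assoc, coeff_X_mul, coeff_ofNat_mul]
  simp only [tangentStep, coeff_add, this]
  omega

theorem degree_iterate_tangentStep_one (n : ℕ) : (tangentStep^[n] (1 : ℕ[X])).degree = n := by
  have key : (tangentStep^[n] (1 : ℕ[X])).natDegree ≤ n ∧
      (tangentStep^[n] (1 : ℕ[X])).coeff n ≠ 0 := by
    induction n with
    | zero => simp
    | succ n ih =>
      rw [Function.iterate_succ_apply']
      exact ⟨natDegree_tangentStep_le ih.1, coeff_tangentStep_succ_ne_zero ih.2⟩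
  exact degree_eq_of_le_of_coeff_ne_zero (degree_le_of_natDegree_le key.1) key.2

theorem P_succ_eq_mul_iterate_tangentStep (n : ℕ) :
    P (n + 1) = (1 + X ^ 2) * tangentStep^[n] 1 := by
  induction n with
  | zero => simp [P]
  | succ n ih =>
    rw [P, ih, Function.iterate_succ_apply' tangentStep, tangentStep]
    simp only [derivative_mul, derivative_add, derivative_one, derivative_X_pow, Nat.cast_ofNat,
      map_ofNat]
    ring

theorem tangent_polynomials (n : ℕ) (hn : 1 ≤ n) :
    ∃ T : Polynomial ℝ,
      Polynomial.X * P n = (1 + Polynomial.X ^ 2) * T ∧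
      T.degree = n ∧
      ∀ k : ℕ, ∃ m : ℕ, T.coeff k = (m : ℝ) := by
  obtain ⟨m, rfl⟩ := Nat.exists_eq_add_of_le' hn
  set q : ℕ[X] := tangentStep^[m] 1
  refine ⟨X * q.map (Nat.castRingHom ℝ), ?_, ?_, ?_⟩
  · rw [P_succ_eq_mul_iterate_tangentStep, map_iterate_tangentStep_one]
    ring
  · rw [degree_mul, degree_X, degree_map_eq_of_injective Nat.cast_injective,
      degree_iterate_tangentStep_one]
    push_cast
    ring
  · rintro (_ | k)
    · exact ⟨0, by simp⟩
    · exact ⟨q.coeff k, by simp [coeff_X_mul]⟩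
end

section
/- Euler's partial fraction expansion of the tangent: for every real $z$ not of the form $(2k-1)\pi/2$, $\tan z = \sum_{k=1}^{\infty} \frac{8z}{(2k-1)^2\pi^2 - 4z^2}$. -/
/-!
Shift the Mittag-Leffler expansion of the cotangent by half a period: with `w = π (x + 1/2)`,
`tan w = -cot (π x)`, and pairing the poles `k` and `-(k + 1)` of `π cot (π x)` gives the `k`-th
term of the series. This pairing changes the `N`-th partial sum of the standard expansion only by
`1 / x - 1 / (x - N)`.
-/

open Real

open Complex Filter Topology

namespace Complex

lemma sum_range_one_div_sub_add_one_div_add_succ (x : ℂ) (N : ℕ) :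
    ∑ k ∈ Finset.range N, (1 / (x - k) + 1 / (x + (k + 1))) =
      1 / x + ∑ k ∈ Finset.range N, cotTerm x k - 1 / (x - N) := by
  induction N with
  | zero => simp
  | succ N ih =>
    rw [Finset.sum_range_succ, Finset.sum_range_succ, ih, cotTerm]
    push_cast
    ring

lemma summable_one_div_sub_add_one_div_add_succ {x : ℂ} (hx : x ∈ integerComplement) :
    Summable fun k : ℕ ↦ 1 / (x - k) + 1 / (x + (k + 1)) := by
  have hodd_inj : Function.Injective fun k : ℕ ↦ (2 * k + 1 : ℤ) := fun a b h ↦ by simpa using h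
  have hodd := (EisensteinSeries.summable_linear_sub_mul_linear_add (2 * x + 1) 1 1).comp_injective
    hodd_inj
  refine (hodd.mul_left (4 * (2 * x + 1))).congr fun k ↦ ?_
  have h1 : x - k ≠ 0 := by simpa [sub_eq_add_neg] using integerComplement_add_ne_zero hx (-k)
  have h2 : x + (k + 1) ≠ 0 := by simpa using integerComplement_add_ne_zero hx (k + 1)
  simp only [Function.comp_apply]
  push_cast
  rw [show (1 * (2 * x + 1) - (2 * k + 1)) * (1 * (2 * x + 1) + (2 * k + 1)) =
    4 * ((x - k) * (x + (k + 1))) by ring]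
  field_simp
  ring

lemma hasSum_pi_mul_cot_pi_mul {x : ℂ} (hx : x ∈ integerComplement) :
    HasSum (fun k : ℕ ↦ 1 / (x - k) + 1 / (x + (k + 1))) (π * cot (π * x)) := by
  rw [(summable_one_div_sub_add_one_div_add_succ hx).hasSum_iff_tendsto_nat]
  simp_rw [sum_range_one_div_sub_add_one_div_add_succ]
  have hlim : Tendsto (fun N : ℕ ↦ 1 / (x - N)) atTop (𝓝 0) := by
    simpa using EisensteinSeries.tendsto_zero_inv_linear_sub x 1
  simpa using ((tendsto_logDeriv_euler_cot_sub hx).const_add (1 / x)).sub hlim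

lemma exists_mem_integerComplement_eq_pi_mul_add_half {w : ℂ} (hw : cos w ≠ 0) :
    ∃ x ∈ integerComplement, w = π * (x + 1 / 2) := by
  have hpi : (π : ℂ) ≠ 0 := ofReal_ne_zero.mpr pi_ne_zero
  refine ⟨w / π - 1 / 2, fun ⟨k, hk⟩ ↦ hw (cos_eq_zero_iff.mpr ⟨k, ?_⟩), by field_simp; ring⟩
  field_simp at hk
  linear_combination -hk / 2

theorem hasSum_tan {w : ℂ} (hw : cos w ≠ 0) :
    HasSum (fun k : ℕ ↦ 8 * w / ((2 * k + 1) ^ 2 * π ^ 2 - 4 * w ^ 2)) (tan w) := by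
  obtain ⟨x, hx, rfl⟩ := exists_mem_integerComplement_eq_pi_mul_add_half hw
  have hpi : (π : ℂ) ≠ 0 := ofReal_ne_zero.mpr pi_ne_zero
  have htan : tan (π * (x + 1 / 2)) = -(1 / π) * (π * cot (π * x)) := by
    rw [show (π : ℂ) * x = π * (x + 1 / 2) - π / 2 by ring, cot_eq_cos_div_sin,
      cos_sub_pi_div_two, sin_sub_pi_div_two, tan_eq_sin_div_cos]
    field_simp
  rw [htan]
  refine ((hasSum_pi_mul_cot_pi_mul hx).mul_left _).congr_fun fun k ↦ ?_
  have h1 : x - k ≠ 0 := by simpa [sub_eq_add_neg] using integerComplement_add_ne_zero hx (-k)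
  have h2 : x + (k + 1) ≠ 0 := by simpa using integerComplement_add_ne_zero hx (k + 1)
  rw [show (2 * k + 1) ^ 2 * π ^ 2 - 4 * (π * (x + 1 / 2)) ^ 2 =
    -4 * π ^ 2 * ((x - k) * (x + (k + 1))) by ring]
  field_simp
  ring

end Complex

theorem tan_partial_fraction (z : ℝ) (hz : Real.cos z ≠ 0) :
    Real.tan z = ∑' k : ℕ,
      8 * z / ((2 * (k : ℝ) + 1) ^ 2 * Real.pi ^ 2 - 4 * z ^ 2) := by
  have h := Complex.hasSum_tan (w := z) (by exact_mod_cast hz)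
  rw [← ofReal_tan] at h
  exact (hasSum_ofReal.mp (by exact_mod_cast h)).tsum_eq.symm
end

section
/- Let $u \in (0,1)$ be the unique fixed point of $\cos$, i.e., $\cos u = u$. Then the infimum over $t > 0$ of $K(t) = \frac{1}{t} + \tan t$ restricted to $t \in (0, \pi/2)$ is attained at $t = u$ and equals $\frac{1}{u}(1 + \sqrt{1 - u^2})$. -/
/-! The derivative of `K t = 1 / t + tan t` is `1 / cos t ^ 2 - 1 / t ^ 2`, which on `(0, π/2)` has
the sign of `t - cos t`. Since `cos t - t` is strictly decreasing there and vanishes at the Dottie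
number `u`, `K` decreases on `(0, u]` and increases on `[u, π/2)`. At `u` we have `cos u = u`, so
`sin u = √(1 - u²)` and `K u = (1 + √(1 - u²)) / u`. -/

open Real Set

lemma hasDerivAt_one_div_add_tan {t : ℝ} (ht : t ≠ 0) (hc : cos t ≠ 0) :
    HasDerivAt (fun t => 1 / t + tan t) (1 / cos t ^ 2 - 1 / t ^ 2) t := by
  have hinv : HasDerivAt (fun t : ℝ => 1 / t) (-(1 / t ^ 2)) t := by
    simpa [one_div] using hasDerivAt_inv ht
  exact (hinv.add (hasDerivAt_tan hc)).congr_deriv (by ring)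

lemma strictAntiOn_cos_sub_self : StrictAntiOn (fun t => cos t - t) (Icc 0 π) := by
  refine strictAntiOn_of_deriv_neg (convex_Icc _ _) (by fun_prop) fun x hx => ?_
  rw [interior_Icc] at hx
  have hd : HasDerivAt (fun t => cos t - t) (-sin x - 1) x :=
    (hasDerivAt_cos x).sub (hasDerivAt_id x)
  rw [hd.deriv]
  linarith [sin_pos_of_pos_of_lt_pi hx.1 hx.2]

lemma cos_lt_self_of_cos_eq_self {u t : ℝ} (hu : u ∈ Icc 0 π) (hfix : cos u = u)
    (ht : t ∈ Icc 0 π) (hut : u < t) : cos t < t := by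
  have := strictAntiOn_cos_sub_self hu ht hut
  simp only [hfix, sub_self] at this
  linarith

lemma lt_cos_of_cos_eq_self {u t : ℝ} (hu : u ∈ Icc 0 π) (hfix : cos u = u)
    (ht : t ∈ Icc 0 π) (htu : t < u) : t < cos t := by
  have := strictAntiOn_cos_sub_self ht hu htu
  simp only [hfix, sub_self] at this
  linarith

section DottieNumber

variable {u : ℝ} (hu : u ∈ Ioo 0 (π / 2)) (hfix : cos u = u)
include hu hfix

lemma strictAntiOn_one_div_add_tan_of_cos_eq_self :
    StrictAntiOn (fun t => 1 / t + tan t) (Ioc 0 u) := by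
  have hderiv : ∀ t ∈ Ioc 0 u, HasDerivAt (fun t => 1 / t + tan t)
      (1 / cos t ^ 2 - 1 / t ^ 2) t := fun t ht =>
    hasDerivAt_one_div_add_tan ht.1.ne'
      (cos_pos_of_mem_Ioo ⟨by linarith [ht.1, pi_pos], ht.2.trans_lt hu.2⟩).ne'
  refine strictAntiOn_of_deriv_neg (convex_Ioc _ _)
    (fun t ht => (hderiv t ht).continuousAt.continuousWithinAt) fun t ht => ?_
  rw [interior_Ioc] at ht
  rw [(hderiv t (Ioo_subset_Ioc_self ht)).deriv, sub_neg]
  have hlt : t < cos t := lt_cos_of_cos_eq_self ⟨hu.1.le, by linarith [hu.2, pi_pos]⟩ hfix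
    ⟨ht.1.le, by linarith [ht.2, hu.2, pi_pos]⟩ ht.2
  exact one_div_lt_one_div_of_lt (pow_pos ht.1 2) (pow_lt_pow_left₀ hlt ht.1.le two_ne_zero)

lemma strictMonoOn_one_div_add_tan_of_cos_eq_self :
    StrictMonoOn (fun t => 1 / t + tan t) (Ico u (π / 2)) := by
  have hderiv : ∀ t ∈ Ico u (π / 2), HasDerivAt (fun t => 1 / t + tan t)
      (1 / cos t ^ 2 - 1 / t ^ 2) t := fun t ht =>
    hasDerivAt_one_div_add_tan (hu.1.trans_le ht.1).ne'
      (cos_pos_of_mem_Ioo ⟨by linarith [hu.1, ht.1, pi_pos], ht.2⟩).ne'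
  refine strictMonoOn_of_deriv_pos (convex_Ico _ _)
    (fun t ht => (hderiv t ht).continuousAt.continuousWithinAt) fun t ht => ?_
  rw [interior_Ico] at ht
  rw [(hderiv t (Ioo_subset_Ico_self ht)).deriv, sub_pos]
  have hcos : 0 < cos t := cos_pos_of_mem_Ioo ⟨by linarith [hu.1, ht.1, pi_pos], ht.2⟩
  have hlt : cos t < t := cos_lt_self_of_cos_eq_self ⟨hu.1.le, by linarith [hu.2, pi_pos]⟩ hfix
    ⟨by linarith [hu.1, ht.1], by linarith [ht.2, pi_pos]⟩ ht.1
  exact one_div_lt_one_div_of_lt (pow_pos hcos 2) (pow_lt_pow_left₀ hlt hcos.le two_ne_zero)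

lemma isLeast_one_div_add_tan_of_cos_eq_self :
    IsLeast ((fun t => 1 / t + tan t) '' Ioo 0 (π / 2)) (1 / u + tan u) := by
  refine ⟨⟨u, hu, rfl⟩, ?_⟩
  rintro _ ⟨t, ht, rfl⟩
  rcases le_total t u with htu | hut
  · exact strictAntiOn_one_div_add_tan_of_cos_eq_self hu hfix
      |>.antitoneOn ⟨ht.1, htu⟩ ⟨hu.1, le_rfl⟩ htu
  · exact strictMonoOn_one_div_add_tan_of_cos_eq_self hu hfix
      |>.monotoneOn ⟨le_rfl, hu.2⟩ ⟨hut, ht.2⟩ hut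

end DottieNumber

lemma tan_eq_sqrt_div_of_cos_eq_self {u : ℝ} (hu : u ∈ Icc 0 π) (hfix : cos u = u) :
    tan u = √(1 - u ^ 2) / u := by
  rw [tan_eq_sin_div_cos, sin_eq_sqrt_one_sub_cos_sq hu.1 hu.2, hfix]

theorem spectral_radius_tangent_law (u : ℝ) (hu : u ∈ Set.Ioo (0 : ℝ) 1)
    (hfix : Real.cos u = u) :
    IsLeast ((fun t : ℝ => 1 / t + Real.tan t) '' Set.Ioo 0 (Real.pi / 2))
        (1 / u + Real.tan u) ∧
      1 / u + Real.tan u = (1 / u) * (1 + Real.sqrt (1 - u ^ 2)) := by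
  have hu_half_pi : u ∈ Ioo 0 (π / 2) := ⟨hu.1, by linarith [hu.2, pi_gt_three]⟩
  refine ⟨isLeast_one_div_add_tan_of_cos_eq_self hu_half_pi hfix, ?_⟩
  rw [tan_eq_sqrt_div_of_cos_eq_self ⟨hu.1.le, by linarith [hu.2, pi_gt_three]⟩ hfix]
  field_simp
end

section
/- For $x = \frac{1}{\pi/2 + k\pi}$ with $k \in \mathbb{Z}$ (so that $1/x$ is a pole of tangent), the nontangential limit $\lim_{\epsilon \to 0^+} i\epsilon \tan\left(\frac{1}{x + i\epsilon}\right) = x^2$. -/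
/-!
Put `c = 1/x = π/2 + kπ`, a pole of `tan`, and `w = 1/x - 1/(x + δ) = δ / (x (x + δ))`.
Then `tan (1/(x + δ)) = tan (c - w) = cot w`, so
`δ tan (1/(x + δ)) = x (x + δ) · w cot w → x²`, because `w cot w → 1` as `w → 0`.
This holds as `δ → 0` in any manner, in particular along `δ = iε`.
-/

open Complex Filter Topology

theorem Real.pi_div_two_add_int_mul_pi_ne_zero (k : ℤ) : Real.pi / 2 + k * Real.pi ≠ 0 := by
  have : (2 * k + 1 : ℝ) ≠ 0 := by exact_mod_cast (by omega : 2 * k + 1 ≠ 0)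
  rw [show Real.pi / 2 + k * Real.pi = Real.pi * (2 * k + 1) / 2 by ring]
  exact div_ne_zero (mul_ne_zero Real.pi_ne_zero this) two_ne_zero

namespace Complex

theorem tendsto_sin_div_self_nhdsNE_zero : Tendsto (fun z : ℂ => sin z / z) (𝓝[≠] 0) (𝓝 1) := by
  simpa [slope_fun_def, div_eq_inv_mul] using hasDerivAt_iff_tendsto_slope.mp (hasDerivAt_sin 0)

theorem tendsto_mul_cot_nhdsNE_zero : Tendsto (fun z : ℂ => z * cot z) (𝓝[≠] 0) (𝓝 1) := by
  have hcos : Tendsto cos (𝓝[≠] 0) (𝓝 1) := by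
    simpa using continuous_cos.continuousWithinAt.tendsto (x := (0 : ℂ)) (s := {0}ᶜ)
  simpa [cot_eq_cos_div_sin, div_eq_mul_inv, mul_comm, mul_left_comm] using
    hcos.mul (tendsto_sin_div_self_nhdsNE_zero.inv₀ one_ne_zero)

theorem tan_pi_div_two_add_int_mul_pi_sub (k : ℤ) (w : ℂ) :
    tan (Real.pi / 2 + k * Real.pi - w) = cot w := by
  rw [add_sub_right_comm, tan_add_int_mul_pi, tan_pi_div_two_sub, tan_inv_eq_cot]

theorem tendsto_mul_tan_inv_add_nhdsNE_zero (k : ℤ) {x : ℂ}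
    (hx : x⁻¹ = Real.pi / 2 + k * Real.pi) :
    Tendsto (fun δ => δ * tan (x + δ)⁻¹) (𝓝[≠] 0) (𝓝 (x ^ 2)) := by
  have hx0 : x ≠ 0 := by
    rintro rfl
    refine Real.pi_div_two_add_int_mul_pi_ne_zero k (ofReal_eq_zero.mp ?_)
    push_cast
    simpa using hx.symm
  have hshift : ∀ᶠ δ in 𝓝[≠] (0 : ℂ), x + δ ≠ 0 :=
    nhdsWithin_le_nhds <| (continuous_const.add continuous_id).continuousAt.eventually_ne
      (by simpa using hx0)
  set w : ℂ → ℂ := fun δ => δ / (x * (x + δ))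
  have hw : Tendsto w (𝓝[≠] 0) (𝓝[≠] 0) := by
    refine tendsto_nhdsWithin_of_tendsto_nhds_of_eventually_within _ ?_ ?_
    · have hw_cont : ContinuousAt w 0 := by
        fun_prop (disch := simpa using hx0)
      simpa [w] using hw_cont.tendsto.mono_left nhdsWithin_le_nhds
    · filter_upwards [hshift, self_mem_nhdsWithin] with δ hδ hδ0
      exact div_ne_zero hδ0 (mul_ne_zero hx0 hδ)
  have heq : ∀ᶠ δ in 𝓝[≠] (0 : ℂ), x * (x + δ) * (w δ * cot (w δ)) = δ * tan (x + δ)⁻¹ := by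
    filter_upwards [hshift] with δ hδ
    have hinv : (x + δ)⁻¹ = Real.pi / 2 + k * Real.pi - w δ := by
      rw [← hx]
      simp only [w]
      field_simp
      ring
    have hδ_eq : x * (x + δ) * w δ = δ := by
      simp only [w]
      field_simp
    rw [hinv, tan_pi_div_two_add_int_mul_pi_sub, ← mul_assoc, hδ_eq]
  have hfactor : Tendsto (fun δ => x * (x + δ)) (𝓝[≠] 0) (𝓝 (x ^ 2)) := by
    have : Continuous fun δ : ℂ => x * (x + δ) := by fun_prop
    simpa [sq] using (this.tendsto 0).mono_left nhdsWithin_le_nhds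
  simpa using (hfactor.mul (tendsto_mul_cot_nhdsNE_zero.comp hw)).congr' heq

theorem tendsto_ofReal_mul_I_nhdsGT_zero :
    Tendsto (fun ε : ℝ => (ε : ℂ) * I) (𝓝[>] 0) (𝓝[≠] 0) := by
  refine tendsto_nhdsWithin_of_tendsto_nhds_of_eventually_within _ ?_ ?_
  · exact (Continuous.tendsto' (by fun_prop) 0 0 (by simp)).mono_left nhdsWithin_le_nhds
  · filter_upwards [self_mem_nhdsWithin] with ε hε
    simpa using (ne_of_gt hε : ε ≠ 0)

end Complex

theorem levy_atom_tangent (k : ℤ) (x : ℝ)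
    (hx : x = 1 / (Real.pi / 2 + k * Real.pi)) :
    Filter.Tendsto
      (fun ε : ℝ => (ε : ℂ) * Complex.I * Complex.tan (1 / ((x : ℂ) + ε * Complex.I)))
      (nhdsWithin 0 (Set.Ioi 0)) (nhds ((x : ℂ) ^ 2)) := by
  have hxinv : (x : ℂ)⁻¹ = Real.pi / 2 + k * Real.pi := by
    rw [hx]
    push_cast
    simp
  refine ((tendsto_mul_tan_inv_add_nhdsNE_zero k hxinv).comp
    tendsto_ofReal_mul_I_nhdsGT_zero).congr fun ε => ?_
  simp [one_div]
end
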